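/- For every eventually externally classical formula B^ec, the double-negation elimination formula (¬¬B^ec) →i B^ec is provable in the ecumenical sequent calculus LE. -/
import Mathlib


namespace Ecumenical

/-! First-order ecumenical language (locally nameless: de Bruijn bound vars,
    named free vars) and the ecumenical sequent calculus LE. -/

inductive Tm where
  | bvar : Nat → Tm
  | fvar : Nat → Tm

/-- Replace the bound variable of index `k` by the free variable `y`. -/
def Tm.openT (k y : Nat) : Tm → Tm
  | .bvar n => if n = k then .fvar y else .bvar n
  | .fvar n => .fvar n

def Tm.fv : Tm → Finset Nat
  | .bvar _ => ∅
  | .fvar n => {n}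

/-- Ecumenical first-order formulas. `ati`/`atc` are intuitionistic/classical
    atomic predicates; quantifiers bind the de Bruijn index 0. -/
inductive Fm where
  | ati : Nat → List Tm → Fm
  | atc : Nat → List Tm → Fm
  | bot : Fm
  | neg : Fm → Fm
  | and : Fm → Fm → Fm
  | ori : Fm → Fm → Fm
  | orc : Fm → Fm → Fm
  | impi : Fm → Fm → Fm
  | impc : Fm → Fm → Fm
  | all : Fm → Fm
  | exi : Fm → Fm
  | exc : Fm → Fm

def Fm.openF (k y : Nat) : Fm → Fm
  | .ati p ts => .ati p (ts.map (Tm.openT k y))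
  | .atc p ts => .atc p (ts.map (Tm.openT k y))
  | .bot => .bot
  | .neg A => .neg (A.openF k y)
  | .and A B => .and (A.openF k y) (B.openF k y)
  | .ori A B => .ori (A.openF k y) (B.openF k y)
  | .orc A B => .orc (A.openF k y) (B.openF k y)
  | .impi A B => .impi (A.openF k y) (B.openF k y)
  | .impc A B => .impc (A.openF k y) (B.openF k y)
  | .all A => .all (A.openF (k+1) y)
  | .exi A => .exi (A.openF (k+1) y)
  | .exc A => .exc (A.openF (k+1) y)

/-- `A.inst y` is `A[y/x]`: the body of a quantifier instantiated with `y`. -/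
def Fm.inst (A : Fm) (y : Nat) : Fm := A.openF 0 y

def Fm.fv : Fm → Finset Nat
  | .ati _ ts => ts.foldr (fun t s => t.fv ∪ s) ∅
  | .atc _ ts => ts.foldr (fun t s => t.fv ∪ s) ∅
  | .bot => ∅
  | .neg A => A.fv
  | .and A B => A.fv ∪ B.fv
  | .ori A B => A.fv ∪ B.fv
  | .orc A B => A.fv ∪ B.fv
  | .impi A B => A.fv ∪ B.fv
  | .impc A B => A.fv ∪ B.fv
  | .all A => A.fv
  | .exi A => A.fv
  | .exc A => A.fv

/-- `y` is fresh for every formula in the context `Γ`. -/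
def FreshIn (y : Nat) (Γ : Multiset Fm) : Prop := ∀ B ∈ Γ, y ∉ B.fv

/-- Intuitionistic bi-implication `A ↔i B`. -/
def Fm.iffi (A B : Fm) : Fm := .and (.impi A B) (.impi B A)

/-- The ecumenical sequent calculus LE, with single-succedent sequents `Γ ⊢ C`. -/
inductive LE : Multiset Fm → Fm → Prop where
  | init (p ts Γ) : LE (Fm.ati p ts ::ₘ Γ) (Fm.ati p ts)
  | botL (Γ A) : LE (Fm.bot ::ₘ Γ) A
  | cut {Γ A C} : LE Γ A → LE (A ::ₘ Γ) C → LE Γ C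
  | wk {Γ} (A) : LE Γ Fm.bot → LE Γ A
  | andL {Γ A B C} : LE (A ::ₘ B ::ₘ Γ) C → LE (Fm.and A B ::ₘ Γ) C
  | andR {Γ A B} : LE Γ A → LE Γ B → LE Γ (Fm.and A B)
  | oriL {Γ A B C} : LE (A ::ₘ Γ) C → LE (B ::ₘ Γ) C → LE (Fm.ori A B ::ₘ Γ) C
  | oriR1 {Γ A} (B) : LE Γ A → LE Γ (Fm.ori A B)
  | oriR2 {Γ B} (A) : LE Γ B → LE Γ (Fm.ori A B)
  | impiL {Γ A B C} : LE (Fm.impi A B ::ₘ Γ) A → LE (B ::ₘ Γ) C →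
      LE (Fm.impi A B ::ₘ Γ) C
  | impiR {Γ A B} : LE (A ::ₘ Γ) B → LE Γ (Fm.impi A B)
  | negL {Γ A} : LE (Fm.neg A ::ₘ Γ) A → LE (Fm.neg A ::ₘ Γ) Fm.bot
  | negR {Γ A} : LE (A ::ₘ Γ) Fm.bot → LE Γ (Fm.neg A)
  | allL {Γ A C} (y) : LE (A.inst y ::ₘ Fm.all A ::ₘ Γ) C → LE (Fm.all A ::ₘ Γ) C
  | allR {Γ A} (y) : y ∉ A.fv → FreshIn y Γ → LE Γ (A.inst y) → LE Γ (Fm.all A)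
  | exiL {Γ A C} (y) : y ∉ A.fv → FreshIn y Γ → y ∉ C.fv →
      LE (A.inst y ::ₘ Γ) C → LE (Fm.exi A ::ₘ Γ) C
  | exiR {Γ A} (y) : LE Γ (A.inst y) → LE Γ (Fm.exi A)
  | orcR {Γ A B} : LE (Fm.neg A ::ₘ Fm.neg B ::ₘ Γ) Fm.bot → LE Γ (Fm.orc A B)
  | impcR {Γ A B} : LE (A ::ₘ Fm.neg B ::ₘ Γ) Fm.bot → LE Γ (Fm.impc A B)
  | excR {Γ A} : LE (Fm.all (Fm.neg A) ::ₘ Γ) Fm.bot → LE Γ (Fm.exc A)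
  | Rc {Γ p ts} : LE (Fm.neg (Fm.ati p ts) ::ₘ Γ) Fm.bot → LE Γ (Fm.atc p ts)
  | orcL {Γ A B} : LE (A ::ₘ Γ) Fm.bot → LE (B ::ₘ Γ) Fm.bot →
      LE (Fm.orc A B ::ₘ Γ) Fm.bot
  | impcL {Γ A B} : LE (Fm.impc A B ::ₘ Γ) A → LE (B ::ₘ Γ) Fm.bot →
      LE (Fm.impc A B ::ₘ Γ) Fm.bot
  | excL {Γ A} (y) : y ∉ A.fv → FreshIn y Γ →
      LE (A.inst y ::ₘ Γ) Fm.bot → LE (Fm.exc A ::ₘ Γ) Fm.bot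
  | Lc {Γ p ts} : LE (Fm.ati p ts ::ₘ Γ) Fm.bot → LE (Fm.atc p ts ::ₘ Γ) Fm.bot


/-- Externally classical formulas: `A^c ::= p_c | ⊥ | A ∨c A | A →c A | ∃c x.A`. -/
inductive IsEC : Fm → Prop where
  | atc (p ts) : IsEC (.atc p ts)
  | bot : IsEC .bot
  | orc (A B) : IsEC (.orc A B)
  | impc (A B) : IsEC (.impc A B)
  | exc (A) : IsEC (.exc A)

/-- Eventually externally classical formulas:
    `A^ec ::= A^c | A^ec ∧ A^ec | ∀x.A^ec | A →i A^ec | ¬A`. -/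
inductive IsEEC : Fm → Prop where
  | ec {A} : IsEC A → IsEEC A
  | and {A B} : IsEEC A → IsEEC B → IsEEC (.and A B)
  | all {A} : IsEEC A → IsEEC (.all A)
  | impi {B} (A) : IsEEC B → IsEEC (.impi A B)
  | neg (A) : IsEEC (.neg A)


/-! ### Auxiliary machinery for the proof -/

section Aux

open Multiset

/-- Exchange the first two formulas of the context. -/
theorem ex12 {Γ : Multiset Fm} {A B C : Fm} (h : LE (A ::ₘ B ::ₘ Γ) C) :
    LE (B ::ₘ A ::ₘ Γ) C := by rwa [Multiset.cons_swap] at h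

/-- Pull the third formula of the context to the front. -/
theorem rot3 {Γ : Multiset Fm} {A B D C : Fm} (h : LE (A ::ₘ B ::ₘ D ::ₘ Γ) C) :
    LE (D ::ₘ A ::ₘ B ::ₘ Γ) C := by
  rw [Multiset.cons_swap B D] at h; exact ex12 h

/-- Pull the fourth formula of the context to the front. -/
theorem rot4 {Γ : Multiset Fm} {A B D E C : Fm} (h : LE (A ::ₘ B ::ₘ D ::ₘ E ::ₘ Γ) C) :
    LE (E ::ₘ A ::ₘ B ::ₘ D ::ₘ Γ) C := by
  rw [Multiset.cons_swap D E] at h; exact rot3 h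

/-- Size of a formula; invariant under variable opening. -/
def Fm.size : Fm → Nat
  | .ati _ _ => 1
  | .atc _ _ => 1
  | .bot => 1
  | .neg A => A.size + 1
  | .and A B => A.size + B.size + 1
  | .ori A B => A.size + B.size + 1
  | .orc A B => A.size + B.size + 1
  | .impi A B => A.size + B.size + 1
  | .impc A B => A.size + B.size + 1
  | .all A => A.size + 1
  | .exi A => A.size + 1
  | .exc A => A.size + 1

theorem size_openF (A : Fm) : ∀ k y, (A.openF k y).size = A.size := by
  induction A <;> intro k y <;> simp [Fm.openF, Fm.size, *]

theorem size_inst (A : Fm) (y : Nat) : (A.inst y).size = A.size := size_openF A 0 y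

theorem IsEC.openF {A : Fm} (h : IsEC A) (k y : Nat) : IsEC (A.openF k y) := by
  cases h <;> simp [Fm.openF] <;> constructor

theorem IsEEC.openF {A : Fm} (h : IsEEC A) : ∀ k y, IsEEC (A.openF k y) := by
  induction h with
  | ec h => exact fun k y => .ec (h.openF k y)
  | and _ _ ihA ihB => exact fun k y => .and (ihA k y) (ihB k y)
  | all _ ihA => exact fun k y => .all (ihA (k+1) y)
  | impi A _ ihB => exact fun k y => .impi _ (ihB k y)
  | neg A => exact fun k y => .neg _

theorem exists_fresh (A : Fm) (Γ : Multiset Fm) :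
    ∃ y, y ∉ A.fv ∧ FreshIn y Γ := by
  obtain ⟨y, hy⟩ := (A.fv ∪ (Γ.map Fm.fv).sup).exists_notMem
  refine ⟨y, fun h => hy (Finset.mem_union_left _ h), fun B hB h => ?_⟩
  exact hy (Finset.mem_union_right _
    (Finset.mem_of_subset (Multiset.le_sup (Multiset.mem_map_of_mem Fm.fv hB)) h))

/-- Identity expansion: `A, Γ ⊢ A` for every formula `A`. -/
theorem ident : ∀ (A : Fm) (Γ : Multiset Fm), LE (A ::ₘ Γ) A := by
  suffices h : ∀ n (A : Fm), A.size ≤ n → ∀ Γ, LE (A ::ₘ Γ) A from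
    fun A Γ => h A.size A le_rfl Γ
  intro n
  induction n with
  | zero => intro A hA; cases A <;> simp [Fm.size] at hA
  | succ n ih =>
    intro A hA Γ
    cases A with
    | ati p ts => exact .init p ts Γ
    | atc p ts =>
      apply LE.Rc; apply ex12; apply LE.Lc; apply ex12; apply LE.negL; apply ex12
      exact .init p ts _
    | bot => exact .botL Γ _
    | neg A =>
      apply LE.negR; apply ex12; apply LE.negL; apply ex12
      exact ih A (by simp [Fm.size] at hA; omega) _
    | and A B =>
      simp [Fm.size] at hA
      apply LE.andL; apply LE.andR
      · exact ih A (by omega) _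
      · exact ex12 (ih B (by omega) _)
    | ori A B =>
      simp [Fm.size] at hA
      apply LE.oriL
      · exact LE.oriR1 _ (ih A (by omega) _)
      · exact LE.oriR2 _ (ih B (by omega) _)
    | orc A B =>
      simp [Fm.size] at hA
      apply LE.orcR; apply rot3; apply rot3; apply LE.orcL
      · apply ex12; apply LE.negL; apply ex12; exact ih A (by omega) _
      · apply rot3; apply rot3; apply LE.negL; apply ex12; exact ih B (by omega) _
    | impi A B =>
      simp [Fm.size] at hA
      apply LE.impiR; apply ex12; apply LE.impiL
      · exact ex12 (ih A (by omega) _)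
      · exact ih B (by omega) _
    | impc A B =>
      simp [Fm.size] at hA
      apply LE.impcR; apply rot3; apply rot3; apply LE.impcL
      · apply rot3; exact ih A (by omega) _
      · apply rot3; apply rot3; apply LE.negL; apply ex12; exact ih B (by omega) _
    | all A =>
      simp [Fm.size] at hA
      obtain ⟨y, hy, hΓ⟩ := exists_fresh A (Fm.all A ::ₘ Γ)
      apply LE.allR y hy hΓ
      apply LE.allL y
      exact ih (A.inst y) (by rw [size_inst]; omega) _
    | exi A =>
      simp [Fm.size] at hA
      obtain ⟨y, hy, hΓ⟩ := exists_fresh A Γ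
      apply LE.exiL y hy hΓ (by simpa [Fm.fv] using hy)
      apply LE.exiR y
      exact ih (A.inst y) (by rw [size_inst]; omega) _
    | exc A =>
      simp [Fm.size] at hA
      apply LE.excR; apply ex12
      obtain ⟨y, hy, hΓ⟩ := exists_fresh A (Fm.all (Fm.neg A) ::ₘ Γ)
      apply LE.excL y hy hΓ
      apply ex12
      apply LE.allL y
      show LE (Fm.neg (A.inst y) ::ₘ _) _
      apply LE.negL
      apply rot3; apply rot3
      exact ih (A.inst y) (by rw [size_inst]; omega) _

/-- Double-negation elimination for eventually externally classical formulas,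
    with an arbitrary context. -/
theorem dneAux : ∀ n (B : Fm), B.size ≤ n → IsEEC B → ∀ Γ,
    LE (Fm.neg (Fm.neg B) ::ₘ Γ) B := by
  intro n
  induction n with
  | zero => intro B hB; cases B <;> simp [Fm.size] at hB
  | succ n ih =>
    intro B hB hEEC Γ
    cases hEEC with
    | ec hc =>
      cases hc with
      | atc p ts =>
        apply LE.Rc; apply ex12; apply LE.negL; apply LE.negR; apply LE.Lc
        apply rot3; apply rot3; apply LE.negL; apply ex12
        exact .init p ts _
      | bot =>
        apply LE.negL; apply LE.negR; exact .botL _ _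
      | orc A B =>
        apply LE.orcR; apply rot3; apply rot3; apply LE.negL; apply LE.negR
        apply LE.orcL
        · apply rot3; apply rot3; apply LE.negL; apply ex12; exact ident A _
        · apply rot4; apply rot4; apply rot4; apply LE.negL; apply ex12
          exact ident B _
      | impc A B =>
        apply LE.impcR; apply rot3; apply rot3; apply LE.negL; apply LE.negR
        apply LE.impcL
        · apply rot3; apply rot3; exact ident A _
        · apply rot4; apply rot4; apply rot4; apply LE.negL; apply ex12
          exact ident B _
      | exc A =>
        apply LE.excR; apply ex12; apply LE.negL; apply LE.negR
        obtain ⟨y, hy, hΓ⟩ := exists_fresh A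
          (Fm.neg (Fm.neg (Fm.exc A)) ::ₘ Fm.all (Fm.neg A) ::ₘ Γ)
        apply LE.excL y hy hΓ
        apply rot3; apply rot3
        apply LE.allL y
        show LE (Fm.neg (A.inst y) ::ₘ _) _
        apply LE.negL
        apply rot3; apply rot3
        exact ident (A.inst y) _
    | and hA hB' =>
      rename_i A B
      simp [Fm.size] at hB
      apply LE.andR
      · apply LE.cut (A := Fm.neg (Fm.neg A))
        · apply LE.negR; apply ex12; apply LE.negL; apply LE.negR; apply LE.andL
          apply rot4; apply rot4; apply rot4; apply LE.negL; apply ex12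
          exact ident A _
        · exact ih A (by omega) hA _
      · apply LE.cut (A := Fm.neg (Fm.neg B))
        · apply LE.negR; apply ex12; apply LE.negL; apply LE.negR; apply LE.andL
          apply rot4; apply rot4; apply rot4; apply LE.negL; apply rot3; apply rot3
          exact ident B _
        · exact ih B (by omega) hB' _
    | all hA =>
      rename_i A
      simp [Fm.size] at hB
      obtain ⟨y, hy, hΓ⟩ := exists_fresh A (Fm.neg (Fm.neg (Fm.all A)) ::ₘ Γ)
      apply LE.allR y hy hΓ
      apply LE.cut (A := Fm.neg (Fm.neg (A.inst y)))
      · apply LE.negR; apply ex12; apply LE.negL; apply LE.negR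
        apply LE.allL y
        apply rot4; apply rot4; apply rot4; apply LE.negL; apply ex12
        exact ident (A.inst y) _
      · exact ih (A.inst y) (by rw [size_inst]; omega) (hA.openF 0 y) _
    | impi A hB' =>
      rename_i B'
      simp [Fm.size] at hB
      apply LE.impiR
      apply LE.cut (A := Fm.neg (Fm.neg B'))
      · apply LE.negR; apply rot3; apply rot3; apply LE.negL; apply LE.negR
        apply LE.impiL
        · apply rot4; apply rot4; apply rot4; exact ident A _
        · apply rot3; apply rot3; apply LE.negL; apply ex12; exact ident B' _
      · exact ih B' (by omega) hB' _
    | neg A =>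
      apply LE.negR; apply ex12; apply LE.negL; apply LE.negR; apply LE.negL
      apply rot3; apply rot3
      exact ident A _

end Aux

/-- For every eventually externally classical formula B, `⊢_LE ¬¬B →i B`. -/
theorem LE_dne_eec (B : Fm) (hB : IsEEC B) :
    LE 0 (Fm.impi (.neg (.neg B)) B) :=
  LE.impiR (dneAux B.size B le_rfl hB 0)

end Ecumenical
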